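/- arXiv:1608.01528 — 4 statements merged into one kernel-verified Lean document; each statement's English description precedes it below -/
import Mathlib

section
/- Every N-partite causal correlation P can be written as a convex combination P(a|x) = Σ_α q_α · P_α^det(a|x) with weights q_α ≥ 0 summing to 1, where the sum ranges over functions α from the set of input lists x to the set of output lists a such that the deterministic correlation P_α^det(a|x) := δ_{a,α(x)} (equal to 1 if a = α(x) and 0 otherwise) is itself causal. -/
/-- A correlation for the parties in the finite set `S`, where party `i` has input set `X i`
and output set `A i`: a real number `P x a` for each assignment of inputs `x` and outputs `a`
for the parties in `S`. -/
def Corr {ι : Type} (X A : ι → Type) (S : Finset ι) : Type :=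
  ((i : {j // j ∈ S}) → X i.1) → ((i : {j // j ∈ S}) → A i.1) → ℝ

/-- `p` is a probability distribution on the finite type `α`. -/
def IsProbDist {α : Type} [Fintype α] (p : α → ℝ) : Prop :=
  (∀ a, 0 ≤ p a) ∧ ∑ a, p a = 1

/-- Restriction of a tuple indexed by `S` to a subset `T ⊆ S`. -/
def restr {ι : Type} {X : ι → Type} {S T : Finset ι} (h : T ⊆ S)
    (x : (i : {j // j ∈ S}) → X i.1) : (i : {j // j ∈ T}) → X i.1 :=
  fun i => x ⟨i.1, h i.2⟩

theorem erase_sub {ι : Type} [DecidableEq ι] (S : Finset ι) (k : ι) : S.erase k ⊆ S :=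
  fun _ hi => Finset.mem_of_mem_erase hi

theorem sdiff_sub {ι : Type} [DecidableEq ι] (S K : Finset ι) : S \ K ⊆ S :=
  fun _ hi => (Finset.mem_sdiff.mp hi).1

/-- Combine a tuple on `K` and a tuple on `S \ K` into a tuple on `S`. -/
def glue {ι : Type} [DecidableEq ι] {X : ι → Type} {S K : Finset ι} (_ : K ⊆ S)
    (u : (i : {j // j ∈ K}) → X i.1) (v : (i : {j // j ∈ S \ K}) → X i.1) :
    (i : {j // j ∈ S}) → X i.1 :=
  fun i => if h : i.1 ∈ K then u ⟨i.1, h⟩ else v ⟨i.1, Finset.mem_sdiff.mpr ⟨i.2, h⟩⟩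

/-- Insert a value for party `k` into a tuple on `S.erase k`, giving a tuple on `S`. -/
def ins {ι : Type} [DecidableEq ι] {X : ι → Type} {S : Finset ι} {k : ι} (_ : k ∈ S)
    (xk : X k) (u : (i : {j // j ∈ S.erase k}) → X i.1) : (i : {j // j ∈ S}) → X i.1 :=
  fun i => if h : i.1 = k then cast (congrArg X h.symm) xk
    else u ⟨i.1, Finset.mem_erase.mpr ⟨h, i.2⟩⟩

/-- Causal correlations, defined by induction on the number of parties: any single-party
probability distribution is causal; a correlation on a set `S` of at least two parties is
causal iff it is a convex combination, over choices of a party `k ∈ S` acting first, of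
products of a single-party distribution for `k` with causal correlations for the remaining
parties `S.erase k` that may depend on the input and output of party `k`. -/
inductive IsCausal {ι : Type} [DecidableEq ι] (X A : ι → Type) [∀ i, Fintype (A i)] :
    (S : Finset ι) → Corr X A S → Prop
  | base (k : ι) (P : Corr X A {k}) (hP : ∀ x, IsProbDist (P x)) : IsCausal X A {k} P
  | step (S : Finset ι) (hS : 2 ≤ S.card) (P : Corr X A S)
      (q : {j // j ∈ S} → ℝ)
      (Pfirst : (k : {j // j ∈ S}) → X k.1 → A k.1 → ℝ)
      (Prest : (k : {j // j ∈ S}) → X k.1 → A k.1 → Corr X A (S.erase k.1))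
      (hq : ∀ k, 0 ≤ q k)
      (hq1 : ∑ k ∈ S.attach, q k = 1)
      (hPfirst : ∀ k xk, IsProbDist (Pfirst k xk))
      (hPrest : ∀ k xk ak, IsCausal X A (S.erase k.1) (Prest k xk ak))
      (hP : ∀ x a, P x a = ∑ k ∈ S.attach, q k * Pfirst k (x k) (a k) *
            Prest k (x k) (a k) (restr (erase_sub S k.1) x) (restr (erase_sub S k.1) a)) :
      IsCausal X A S P

/-! Induction along `IsCausal`. A family of distributions `P x`, one for each input list `x`,
is the mixture of all deterministic strategies `α` with the product weights
`∏ x, P x (α x)`; this settles one party. In the inductive step, for the term in which party `k`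
acts first, draw for each input of `k` its output together with a deterministic strategy of
the other parties given by the induction hypothesis; doing so independently for all inputs of
`k` produces a deterministic strategy in which `k` acts first, which is causal. Mixing over
`k` keeps this form. -/

theorem Fintype.sum_pi_prod_mul_apply {R : Type*} [CommSemiring R] {I : Type*} [Fintype I]
    [DecidableEq I] {B : I → Type*} [∀ i, Fintype (B i)] (w : (i : I) → B i → R)
    (hw : ∀ i, ∑ b, w i b = 1) (i₀ : I) (F : B i₀ → R) :
    ∑ g : (i : I) → B i, (∏ i, w i (g i)) * F (g i₀) = ∑ b, w i₀ b * F b := by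
  -- absorb `F` into the `i₀`-th factor, then expand the product of sums
  have hfactor : ∀ g : (i : I) → B i, (∏ i, w i (g i)) * F (g i₀)
      = ∏ i, w i (g i) * if h : i = i₀ then F (h ▸ g i) else 1 := fun g => by
    rw [Finset.prod_mul_distrib, Finset.prod_dite_eq', if_pos (Finset.mem_univ _)]
  rw [Finset.sum_congr rfl fun g _ => hfactor g,
    ← Fintype.prod_sum (f := fun i b => w i b * if h : i = i₀ then F (h ▸ b) else 1),
    Fintype.prod_eq_single i₀ fun i hi => by simpa [dif_neg hi] using hw i]
  simp only [dite_true]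

theorem IsProbDist.pi {I : Type} [Fintype I] [DecidableEq I] {B : I → Type}
    [∀ i, Fintype (B i)] {w : (i : I) → B i → ℝ} (hw : ∀ i, IsProbDist (w i)) :
    IsProbDist fun g : (i : I) → B i => ∏ i, w i (g i) :=
  ⟨fun _ => Finset.prod_nonneg fun i _ => (hw i).1 _,
    by rw [← Fintype.prod_sum]; exact Finset.prod_eq_one fun i _ => (hw i).2⟩

theorem IsProbDist.prod_of_cond {B C : Type} [Fintype B] [Fintype C] {p : B → ℝ}
    {r : B → C → ℝ} (hp : IsProbDist p) (hr : ∀ b, IsProbDist (r b)) :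
    IsProbDist fun bc : B × C => p bc.1 * r bc.1 bc.2 := by
  refine ⟨fun bc => mul_nonneg (hp.1 _) ((hr _).1 _), ?_⟩
  simp_rw [Fintype.sum_prod_type, ← Finset.mul_sum, (hr _).2, mul_one]
  exact hp.2

theorem isProbDist_ite_eq {B : Type} [Fintype B] [DecidableEq B] (b₀ : B) :
    IsProbDist fun b => if b = b₀ then (1 : ℝ) else 0 :=
  ⟨fun b => by dsimp only; split_ifs <;> norm_num, by simp⟩

section Deterministic

variable {ι : Type} [DecidableEq ι] {X A : ι → Type}

abbrev DetStrategy (X A : ι → Type) (S : Finset ι) : Type :=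
  ((i : {j // j ∈ S}) → X i.1) → ((i : {j // j ∈ S}) → A i.1)

def detCorr [∀ i, DecidableEq (A i)] {S : Finset ι} (α : DetStrategy X A S) :
    ((i : {j // j ∈ S}) → X i.1) → ((i : {j // j ∈ S}) → A i.1) → ℝ :=
  fun x a => if a = α x then 1 else 0

def DetStrategy.firstParty {S : Finset ι} (k : {j // j ∈ S})
    (g : X k.1 → A k.1 × DetStrategy X A (S.erase k.1)) : DetStrategy X A S :=
  fun x => ins k.2 (g (x k)).1 ((g (x k)).2 (restr (erase_sub S k.1) x))

theorem eq_ins_iff {S : Finset ι} (k : {j // j ∈ S}) (ak : A k.1)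
    (u : (i : {j // j ∈ S.erase k.1}) → A i.1) (a : (i : {j // j ∈ S}) → A i.1) :
    a = ins k.2 ak u ↔ a k = ak ∧ restr (erase_sub S k.1) a = u := by
  constructor
  · rintro rfl
    refine ⟨by simp [ins], funext fun i => ?_⟩
    simp [restr, ins, (Finset.mem_erase.mp i.2).1]
  · rintro ⟨rfl, rfl⟩
    funext ⟨i, hi⟩
    by_cases h : i = k.1
    · subst h
      simp [ins]
    · simp [ins, restr, h]

theorem detCorr_firstParty_apply [∀ i, DecidableEq (A i)] {S : Finset ι} (k : {j // j ∈ S})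
    (g : X k.1 → A k.1 × DetStrategy X A (S.erase k.1)) (x : (i : {j // j ∈ S}) → X i.1)
    (a : (i : {j // j ∈ S}) → A i.1) :
    detCorr (DetStrategy.firstParty k g) x a =
      (if a k = (g (x k)).1 then 1 else 0) *
        detCorr (g (x k)).2 (restr (erase_sub S k.1) x) (restr (erase_sub S k.1) a) := by
  simp only [detCorr, DetStrategy.firstParty, eq_ins_iff, ite_zero_mul_ite_zero, one_mul]

end Deterministic

section Causal

variable {ι : Type} [DecidableEq ι] {X A : ι → Type} [∀ i, Fintype (A i)]

/-- `Pfirst` and `Prest` only fill the slots of the parties other than `k`, which get weight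
zero. -/
theorem IsCausal.of_firstParty {S : Finset ι} (hS : 2 ≤ S.card)
    {Pfirst : (k : {j // j ∈ S}) → X k.1 → A k.1 → ℝ}
    {Prest : (k : {j // j ∈ S}) → X k.1 → A k.1 → Corr X A (S.erase k.1)}
    (hPfirst : ∀ k xk, IsProbDist (Pfirst k xk))
    (hPrest : ∀ k xk ak, IsCausal X A (S.erase k.1) (Prest k xk ak))
    (k : {j // j ∈ S}) {p : X k.1 → A k.1 → ℝ} {R : X k.1 → A k.1 → Corr X A (S.erase k.1)}
    (hp : ∀ xk, IsProbDist (p xk)) (hR : ∀ xk ak, IsCausal X A (S.erase k.1) (R xk ak)) :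
    IsCausal X A S fun x a =>
      p (x k) (a k) * R (x k) (a k) (restr (erase_sub S k.1) x) (restr (erase_sub S k.1) a) := by
  refine IsCausal.step S hS _ (Pi.single k 1) (Function.update Pfirst k p)
    (Function.update Prest k R) (fun k' => ?_) (by simp) (fun k' => ?_) (fun k' => ?_)
    (fun x a => ?_)
  · by_cases h : k' = k <;> simp [h]
  · by_cases h : k' = k
    · subst h; simpa using hp
    · simpa [h] using hPfirst k'
  · by_cases h : k' = k
    · subst h; simpa using hR
    · simpa [h] using hPrest k'
  · rw [Finset.sum_eq_single_of_mem k (Finset.mem_attach _ _) fun k' _ h => by simp [h]]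
    simp

theorem IsCausal.detCorr_firstParty [∀ i, DecidableEq (A i)] {S : Finset ι} (hS : 2 ≤ S.card)
    {Pfirst : (k : {j // j ∈ S}) → X k.1 → A k.1 → ℝ}
    {Prest : (k : {j // j ∈ S}) → X k.1 → A k.1 → Corr X A (S.erase k.1)}
    (hPfirst : ∀ k xk, IsProbDist (Pfirst k xk))
    (hPrest : ∀ k xk ak, IsCausal X A (S.erase k.1) (Prest k xk ak))
    (k : {j // j ∈ S}) (g : X k.1 → A k.1 × DetStrategy X A (S.erase k.1))
    (hg : ∀ xk, IsCausal X A (S.erase k.1) (detCorr (g xk).2)) :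
    IsCausal X A S (detCorr (DetStrategy.firstParty k g)) := by
  rw [show detCorr (DetStrategy.firstParty k g) = _ from funext₂ (detCorr_firstParty_apply k g)]
  exact IsCausal.of_firstParty hS hPfirst hPrest k (fun xk => isProbDist_ite_eq (g xk).1)
    fun xk _ => hg xk

end Causal

section Mixture

variable {ι : Type} [DecidableEq ι] {X A : ι → Type} [∀ i, Fintype (X i)] [∀ i, Fintype (A i)]
  [∀ i, DecidableEq (X i)] [∀ i, DecidableEq (A i)]

def IsDetMixture (S : Finset ι) (P : Corr X A S) : Prop :=
  ∃ q : DetStrategy X A S → ℝ, IsProbDist q ∧ (∀ α, q α ≠ 0 → IsCausal X A S (detCorr α)) ∧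
    ∀ x a, P x a = ∑ α, q α * detCorr α x a

/-- The weight of `α` is the total weight of the fibre of `φ` over `α`. -/
theorem IsDetMixture.of_sum {S : Finset ι} {P : Corr X A S} {G : Type} [Fintype G] {w : G → ℝ}
    (hw : IsProbDist w) (φ : G → DetStrategy X A S)
    (hφ : ∀ g, w g ≠ 0 → IsCausal X A S (detCorr (φ g)))
    (hP : ∀ x a, P x a = ∑ g, w g * detCorr (φ g) x a) : IsDetMixture S P := by
  refine ⟨fun α => ∑ g with φ g = α, w g,
    ⟨fun α => Finset.sum_nonneg fun g _ => hw.1 g, by rw [Finset.sum_fiberwise, hw.2]⟩,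
    fun α hα => ?_, fun x a => ?_⟩
  · obtain ⟨g, hg, hwg⟩ := Finset.exists_ne_zero_of_sum_ne_zero hα
    rw [← (Finset.mem_filter.mp hg).2]
    exact hφ g hwg
  · rw [hP, ← Finset.sum_fiberwise Finset.univ φ]
    refine Finset.sum_congr rfl fun α _ => ?_
    rw [Finset.sum_mul]
    exact Finset.sum_congr rfl fun g hg => by rw [(Finset.mem_filter.mp hg).2]

theorem IsDetMixture.of_isProbDist {S : Finset ι} {P : Corr X A S}
    (hP : ∀ x, IsProbDist (P x)) (hdet : ∀ α, IsCausal X A S (detCorr α)) :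
    IsDetMixture S P :=
  IsDetMixture.of_sum (IsProbDist.pi hP) id (fun α _ => hdet α) fun x a => by
    simp only [detCorr, id]
    rw [Fintype.sum_pi_prod_mul_apply (fun x => P x) (fun x => (hP x).2) x
      fun b => if a = b then 1 else 0]
    simp

theorem IsDetMixture.sum {S : Finset ι} {P : Corr X A S} {K : Type} [Fintype K] {q : K → ℝ}
    (hq : IsProbDist q) {Q : K → Corr X A S} (hQ : ∀ k, IsDetMixture S (Q k))
    (hP : ∀ x a, P x a = ∑ k, q k * Q k x a) : IsDetMixture S P := by
  choose r hr hrC hrQ using hQ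
  refine IsDetMixture.of_sum (hq.prod_of_cond hr) Prod.snd
    (fun kα h => hrC kα.1 kα.2 (right_ne_zero_of_mul h)) fun x a => ?_
  simp_rw [hP, hrQ, Fintype.sum_prod_type, Finset.mul_sum, mul_assoc]

theorem IsDetMixture.firstParty {S : Finset ι} (hS : 2 ≤ S.card)
    {Pfirst : (k : {j // j ∈ S}) → X k.1 → A k.1 → ℝ}
    {Prest : (k : {j // j ∈ S}) → X k.1 → A k.1 → Corr X A (S.erase k.1)}
    (hPfirst : ∀ k xk, IsProbDist (Pfirst k xk))
    (hPrest : ∀ k xk ak, IsCausal X A (S.erase k.1) (Prest k xk ak))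
    (k : {j // j ∈ S}) {p : X k.1 → A k.1 → ℝ} {R : X k.1 → A k.1 → Corr X A (S.erase k.1)}
    (hp : ∀ xk, IsProbDist (p xk)) (hR : ∀ xk ak, IsDetMixture (S.erase k.1) (R xk ak)) :
    IsDetMixture S fun x a =>
      p (x k) (a k) * R (x k) (a k) (restr (erase_sub S k.1) x) (restr (erase_sub S k.1) a) := by
  choose r hr hrC hrR using hR
  -- for each input of `k`, the joint law of the output of `k` and the strategy of the others
  set μ : X k.1 → A k.1 × DetStrategy X A (S.erase k.1) → ℝ := fun xk c => p xk c.1 * r xk c.1 c.2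
  have hμ : ∀ xk, IsProbDist (μ xk) := fun xk => (hp xk).prod_of_cond (hr xk)
  refine IsDetMixture.of_sum (IsProbDist.pi hμ) (DetStrategy.firstParty k)
    (fun g hg => IsCausal.detCorr_firstParty hS hPfirst hPrest k g fun xk => ?_) fun x a => ?_
  · exact hrC xk _ _ (right_ne_zero_of_mul (Finset.prod_ne_zero_iff.mp hg xk (Finset.mem_univ _)))
  · let F : A k.1 × DetStrategy X A (S.erase k.1) → ℝ := fun c =>
      (if a k = c.1 then 1 else 0) *
        detCorr c.2 (restr (erase_sub S k.1) x) (restr (erase_sub S k.1) a)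
    calc p (x k) (a k) * R (x k) (a k) (restr (erase_sub S k.1) x) (restr (erase_sub S k.1) a)
        = ∑ c, μ (x k) c * F c := by
          rw [hrR, Fintype.sum_prod_type, Finset.sum_eq_single (a k)
            (fun b _ hb => by simp [F, Ne.symm hb]) (by simp), Finset.mul_sum]
          refine Finset.sum_congr rfl fun β _ => ?_
          simp only [μ, F, if_true, one_mul]
          ring
      _ = ∑ g : X k.1 → A k.1 × DetStrategy X A (S.erase k.1),
            (∏ xk, μ xk (g xk)) * F (g (x k)) :=
          (Fintype.sum_pi_prod_mul_apply μ (fun xk => (hμ xk).2) (x k) F).symm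
      _ = ∑ g, (∏ xk, μ xk (g xk)) * detCorr (DetStrategy.firstParty k g) x a := by
          simp only [F, detCorr_firstParty_apply]

theorem IsCausal.isDetMixture {S : Finset ι} {P : Corr X A S} (hP : IsCausal X A S P) :
    IsDetMixture S P := by
  induction hP with
  | base k P hP => exact .of_isProbDist hP fun α => .base k _ fun x => isProbDist_ite_eq (α x)
  | step S hS P q Pfirst Prest hq hq1 hPfirst hPrest hP ih =>
    refine .sum ⟨hq, hq1⟩ (fun k => .firstParty hS hPfirst hPrest k (hPfirst k) (ih k))
      fun x a => ?_
    simp_rw [hP, mul_assoc]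
    rfl

end Mixture

/-- every causal correlation is a convex combination of deterministic causal
correlations (weights supported on functions `α` whose associated deterministic correlation
is causal). -/
theorem causal_eq_convex_combination_of_deterministic {ι : Type} [DecidableEq ι]
    (X A : ι → Type) [∀ i, Fintype (X i)] [∀ i, Fintype (A i)]
    [∀ i, DecidableEq (X i)] [∀ i, DecidableEq (A i)]
    (S : Finset ι) (P : Corr X A S) (hP : IsCausal X A S P) :
    ∃ q : (((i : {j // j ∈ S}) → X i.1) → ((i : {j // j ∈ S}) → A i.1)) → ℝ,
      (∀ α, 0 ≤ q α) ∧ (∑ α, q α = 1) ∧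
      (∀ α, q α ≠ 0 → IsCausal X A S (fun x a => if a = α x then (1 : ℝ) else 0)) ∧
      (∀ x a, P x a = ∑ α, q α * (if a = α x then (1 : ℝ) else 0)) := by
  obtain ⟨q, ⟨hq, hq1⟩, hcausal, hP⟩ := hP.isDetMixture
  exact ⟨q, hq, hq1, hcausal, hP⟩
end

section
/- If P' and P'' are two N-partite causal correlations for the same scenario (same input and output sets) and q', q'' ≥ 0 with q' + q'' = 1, then the correlation P defined by P(a|x) = q'·P'(a|x) + q''·P''(a|x) is also causal. In other words, the set of N-partite causal correlations for a fixed scenario is convex. -/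
/-!
Mixing two causal correlations is done by induction on the number of parties. With
decompositions `∑ₖ q'ₖ P'ₖ P'_{k,xₖ,aₖ}` and `∑ₖ q''ₖ P''ₖ P''_{k,xₖ,aₖ}`, the mixture
`t P' + (1 - t) P''` decomposes with weights `t q'ₖ + (1 - t) q''ₖ`, with first-party
distributions mixed in the ratio `t q'ₖ : (1 - t) q''ₖ`, and with remaining correlations
mixed in the ratio `t q'ₖ P'ₖ(aₖ|xₖ) : (1 - t) q''ₖ P''ₖ(aₖ|xₖ)`; the latter are causal by
induction.
-/

section MixRatio

/-- The share of `α` in `α + β`; the arbitrary value `1` at `α + β = 0` keeps it in `[0, 1]`. -/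
noncomputable def mixRatio (α β : ℝ) : ℝ :=
  if α + β = 0 then 1 else α / (α + β)

variable {α β : ℝ}

lemma mixRatio_nonneg (hα : 0 ≤ α) (hβ : 0 ≤ β) : 0 ≤ mixRatio α β := by
  unfold mixRatio
  split_ifs
  · exact zero_le_one
  · positivity

lemma mixRatio_le_one (hα : 0 ≤ α) (hβ : 0 ≤ β) : mixRatio α β ≤ 1 := by
  unfold mixRatio
  split_ifs
  · exact le_rfl
  · exact div_le_one_of_le₀ (by linarith) (by positivity)

lemma add_mul_mixRatio (hα : 0 ≤ α) (hβ : 0 ≤ β) : (α + β) * mixRatio α β = α := by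
  unfold mixRatio
  split_ifs with h
  · linarith
  · exact mul_div_cancel₀ α h

lemma mul_add_mul_eq_mixRatio (hα : 0 ≤ α) (hβ : 0 ≤ β) (u v : ℝ) :
    α * u + β * v = (α + β) * (mixRatio α β * u + (1 - mixRatio α β) * v) := by
  have h := add_mul_mixRatio hα hβ
  linear_combination (u - v) * h.symm

lemma mul_mul_add_mul_mul_eq_mixRatio {t a' a'' f' f'' : ℝ} (ht0 : 0 ≤ t) (ht1 : t ≤ 1)
    (ha' : 0 ≤ a') (ha'' : 0 ≤ a'') (hf' : 0 ≤ f') (hf'' : 0 ≤ f'') (u v : ℝ) :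
    t * (a' * f' * u) + (1 - t) * (a'' * f'' * v) =
      (t * a' + (1 - t) * a'') *
        (mixRatio (t * a') ((1 - t) * a'') * f' +
          (1 - mixRatio (t * a') ((1 - t) * a'')) * f'') *
        (mixRatio (t * a' * f') ((1 - t) * a'' * f'') * u +
          (1 - mixRatio (t * a' * f') ((1 - t) * a'' * f'')) * v) := by
  have hα : 0 ≤ t * a' := mul_nonneg ht0 ha'
  have hβ : 0 ≤ (1 - t) * a'' := mul_nonneg (sub_nonneg.mpr ht1) ha''
  rw [← mul_add_mul_eq_mixRatio hα hβ, ← mul_add_mul_eq_mixRatio (mul_nonneg hα hf')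
    (mul_nonneg hβ hf'')]
  ring

end MixRatio

lemma IsProbDist.mix {α : Type} [Fintype α] {p r : α → ℝ} (hp : IsProbDist p)
    (hr : IsProbDist r) {t : ℝ} (ht0 : 0 ≤ t) (ht1 : t ≤ 1) :
    IsProbDist (fun a => t * p a + (1 - t) * r a) := by
  refine ⟨fun a => ?_, ?_⟩
  · have := hp.1 a
    have := hr.1 a
    have : 0 ≤ 1 - t := sub_nonneg.mpr ht1
    positivity
  · rw [Finset.sum_add_distrib, ← Finset.mul_sum, ← Finset.mul_sum, hp.2, hr.2]
    ring

namespace IsCausal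

variable {ι : Type} [DecidableEq ι] {X A : ι → Type} [∀ i, Fintype (A i)]

lemma isProbDist_of_card_le_one {S : Finset ι} {P : Corr X A S} (h : IsCausal X A S P)
    (hS : S.card ≤ 1) (x : (i : {j // j ∈ S}) → X i.1) : IsProbDist (P x) := by
  cases h with
  | base k P hP => exact hP x
  | step S hS' => omega

theorem mix {S : Finset ι} {P' P'' : Corr X A S} (h' : IsCausal X A S P')
    (h'' : IsCausal X A S P'') {t : ℝ} (ht0 : 0 ≤ t) (ht1 : t ≤ 1) :
    IsCausal X A S (fun x a => t * P' x a + (1 - t) * P'' x a) := by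
  induction h' generalizing t with
  | base k P' hP' =>
    exact .base k _ fun x => (hP' x).mix (h''.isProbDist_of_card_le_one (by simp) x) ht0 ht1
  | step S hS P' q' Pf' Pr' hq' hq1' hPf' hPr' hP' ih =>
    cases h'' with
    | base k P'' _ => simp at hS
    | step _ _ _ q'' Pf'' Pr'' hq'' hq1'' hPf'' hPr'' hP'' =>
      have hα k : 0 ≤ t * q' k := mul_nonneg ht0 (hq' k)
      have hβ k : 0 ≤ (1 - t) * q'' k := mul_nonneg (sub_nonneg.mpr ht1) (hq'' k)
      have hα' k xk ak : 0 ≤ t * q' k * Pf' k xk ak := mul_nonneg (hα k) ((hPf' k xk).1 ak)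
      have hβ' k xk ak : 0 ≤ (1 - t) * q'' k * Pf'' k xk ak :=
        mul_nonneg (hβ k) ((hPf'' k xk).1 ak)
      rw [← Finset.univ_eq_attach] at hq1' hq1''
      have hQ := IsProbDist.mix ⟨hq', hq1'⟩ ⟨hq'', hq1''⟩ ht0 ht1
      refine .step S hS _ _
        (fun k xk ak => mixRatio (t * q' k) ((1 - t) * q'' k) * Pf' k xk ak +
          (1 - mixRatio (t * q' k) ((1 - t) * q'' k)) * Pf'' k xk ak)
        (fun k xk ak y b =>
          mixRatio (t * q' k * Pf' k xk ak) ((1 - t) * q'' k * Pf'' k xk ak) * Pr' k xk ak y b +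
          (1 - mixRatio (t * q' k * Pf' k xk ak) ((1 - t) * q'' k * Pf'' k xk ak)) *
            Pr'' k xk ak y b)
        hQ.1 (by rw [← Finset.univ_eq_attach]; exact hQ.2)
        (fun k xk => (hPf' k xk).mix (hPf'' k xk) (mixRatio_nonneg (hα k) (hβ k))
          (mixRatio_le_one (hα k) (hβ k)))
        (fun k xk ak => ih k xk ak (hPr'' k xk ak) (mixRatio_nonneg (hα' k xk ak) (hβ' k xk ak))
          (mixRatio_le_one (hα' k xk ak) (hβ' k xk ak)))
        fun x a => ?_
      simp only [hP', hP'', Finset.mul_sum, ← Finset.sum_add_distrib]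
      exact Finset.sum_congr rfl fun k _ => mul_mul_add_mul_mul_eq_mixRatio ht0 ht1 (hq' k)
        (hq'' k) ((hPf' k _).1 _) ((hPf'' k _).1 _) _ _

end IsCausal

/-- the set of `N`-partite causal correlations for a fixed scenario is convex. -/
theorem convex_combination_of_causal_isCausal {ι : Type} [DecidableEq ι]
    (X A : ι → Type) [∀ i, Fintype (A i)] (S : Finset ι)
    (P' P'' : Corr X A S) (h' : IsCausal X A S P') (h'' : IsCausal X A S P'')
    (q' q'' : ℝ) (hq' : 0 ≤ q') (hq'' : 0 ≤ q'') (hsum : q' + q'' = 1) :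
    IsCausal X A S (fun x a => q' * P' x a + q'' * P'' x a) := by
  obtain rfl : q'' = 1 - q' := by linarith
  exact h'.mix h'' hq' (by linarith)
end

section
/- Let P be an N-partite causal correlation and let K be a nonempty strict subset of {1,…,N}. Then for every fixed assignment x_{N∖K} of inputs to the parties outside K, the |K|-partite correlation P_{x_{N∖K}} defined by P_{x_{N∖K}}(a_K | x_K) := Σ_{a_{N∖K}} P(a|x) (the marginal over the outputs of the parties outside K, with their inputs fixed to x_{N∖K}) is causal. -/
/-!
Induct on the causal decomposition `P = ∑ₖ qₖ Pₖ ⊗ P_{k,xₖ,aₖ}`; summing out the outputs outside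
`K` commutes with the sum over the first party `k`. If `k ∈ K`, the term is `Pₖ` followed by a
marginal of `P_{k,xₖ,aₖ}`, causal by induction. If `k ∉ K`, its input is fixed and its output is
summed out, so the term is a convex combination, over `aₖ`, of marginals of `P_{k,xₖ,aₖ}`. It
remains that convex combinations of causal correlations are causal, which holds by induction on
the set of parties: mix the decompositions party by party.
-/

theorem restr_self {ι : Type} {X : ι → Type} {S : Finset ι} (h : S ⊆ S)
    (x : (i : {j // j ∈ S}) → X i.1) : restr h x = x :=
  rfl

section Tuples

variable {ι : Type} [DecidableEq ι] {X : ι → Type}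

theorem erase_sdiff_erase_subset (S K : Finset ι) (k : ι) : S.erase k \ K.erase k ⊆ S \ K := by
  intro i
  simp only [Finset.mem_sdiff, Finset.mem_erase]
  tauto

theorem glue_of_mem {S K : Finset ι} (h : K ⊆ S) (u : (i : {j // j ∈ K}) → X i.1)
    (v : (i : {j // j ∈ S \ K}) → X i.1) (i : {j // j ∈ S}) (hi : i.1 ∈ K) :
    glue h u v i = u ⟨i.1, hi⟩ :=
  dif_pos hi

theorem glue_of_notMem {S K : Finset ι} (h : K ⊆ S) (u : (i : {j // j ∈ K}) → X i.1)
    (v : (i : {j // j ∈ S \ K}) → X i.1) (i : {j // j ∈ S}) (hi : i.1 ∉ K) :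
    glue h u v i = v ⟨i.1, Finset.mem_sdiff.mpr ⟨i.2, hi⟩⟩ :=
  dif_neg hi

theorem ins_self {S : Finset ι} {k : ι} (hk : k ∈ S) (xk : X k)
    (u : (i : {j // j ∈ S.erase k}) → X i.1) : ins hk xk u ⟨k, hk⟩ = xk := by
  simp [ins]

/-- Together `hK'T`, `hK'K` and `hD` say that `K' = T ∩ K`. -/
theorem restr_glue {S K T K' : Finset ι} (hKS : K ⊆ S) (hTS : T ⊆ S) (hK'T : K' ⊆ T)
    (hK'K : K' ⊆ K) (hD : T \ K' ⊆ S \ K) (u : (i : {j // j ∈ K}) → X i.1)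
    (w : (i : {j // j ∈ S \ K}) → X i.1) :
    restr hTS (glue hKS u w) = glue hK'T (restr hK'K u) (restr hD w) := by
  funext i
  by_cases hi : i.1 ∈ K'
  · simp [restr, glue, hi, hK'K hi]
  · have hiK : i.1 ∉ K := (Finset.mem_sdiff.mp (hD (Finset.mem_sdiff.mpr ⟨i.2, hi⟩))).2
    simp [restr, glue, hi, hiK]

theorem restr_ins_of_notMem {S T : Finset ι} {k : ι} (hk : k ∈ S) (hTS : T ⊆ S)
    (hkT : k ∉ T) (xk : X k) (u : (i : {j // j ∈ S.erase k}) → X i.1) :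
    restr hTS (ins hk xk u) = restr (Finset.subset_erase.mpr ⟨hTS, hkT⟩) u := by
  funext i
  have hik : i.1 ≠ k := fun h => hkT (h ▸ i.2)
  simp [restr, ins, hik]

def glueEquiv {S K : Finset ι} (h : K ⊆ S) :
    ((i : {j // j ∈ K}) → X i.1) × ((i : {j // j ∈ S \ K}) → X i.1) ≃
      ((i : {j // j ∈ S}) → X i.1) where
  toFun p := glue h p.1 p.2
  invFun x := (restr h x, restr (sdiff_sub S K) x)
  left_inv p := by
    ext i
    · exact glue_of_mem h p.1 p.2 ⟨i.1, h i.2⟩ i.2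
    · exact glue_of_notMem h p.1 p.2 ⟨i.1, sdiff_sub S K i.2⟩ (Finset.mem_sdiff.mp i.2).2
  right_inv x := by
    funext i
    by_cases hi : i.1 ∈ K <;> simp [glue, restr, hi]

def insEquiv {S : Finset ι} {k : ι} (hk : k ∈ S) :
    X k × ((i : {j // j ∈ S.erase k}) → X i.1) ≃ ((i : {j // j ∈ S}) → X i.1) where
  toFun p := ins hk p.1 p.2
  invFun x := (x ⟨k, hk⟩, restr (erase_sub S k) x)
  left_inv p := by
    ext1
    · exact ins_self hk p.1 p.2
    · exact restr_ins_of_notMem hk (erase_sub S k) (Finset.notMem_erase k S) p.1 p.2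
  right_inv x := by
    funext i
    by_cases hi : i.1 = k
    · obtain ⟨i, hiS⟩ := i
      subst hi
      simp [ins]
    · simp [ins, restr, hi]

end Tuples

section Sums

variable {ι : Type} [DecidableEq ι] {A : ι → Type} [∀ i, Fintype (A i)]

theorem sum_glue {S K : Finset ι} (h : K ⊆ S) (f : ((i : {j // j ∈ S}) → A i.1) → ℝ) :
    ∑ a, f a = ∑ u : (i : {j // j ∈ K}) → A i.1, ∑ v : (i : {j // j ∈ S \ K}) → A i.1,
      f (glue h u v) := by
  rw [← (glueEquiv h).sum_comp, Fintype.sum_prod_type]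
  rfl

theorem sum_ins {S : Finset ι} {k : ι} (hk : k ∈ S) (f : ((i : {j // j ∈ S}) → A i.1) → ℝ) :
    ∑ a, f a = ∑ ak : A k, ∑ u : (i : {j // j ∈ S.erase k}) → A i.1, f (ins hk ak u) := by
  rw [← (insEquiv hk).sum_comp, Fintype.sum_prod_type]
  rfl

theorem sum_restr_of_eq {S T : Finset ι} (h : T = S) (f : ((i : {j // j ∈ T}) → A i.1) → ℝ) :
    ∑ v : (i : {j // j ∈ S}) → A i.1, f (restr h.subset v) = ∑ w, f w := by
  subst h
  rfl

end Sums

section WeightedAverage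

variable {J : Type*} (s : Finset J)

/-- The default `d` is returned when all weights vanish, so that an average of distributions
(or of causal correlations) is again one. -/
noncomputable def wavg (w f : J → ℝ) (d : ℝ) : ℝ :=
  if ∑ j ∈ s, w j = 0 then d else (∑ j ∈ s, w j * f j) / ∑ j ∈ s, w j

variable {s} {w : J → ℝ}

theorem sum_mul_wavg (hw : ∀ j, 0 ≤ w j) (f : J → ℝ) (d : ℝ) :
    (∑ j ∈ s, w j) * wavg s w f d = ∑ j ∈ s, w j * f j := by
  by_cases h : ∑ j ∈ s, w j = 0
  · have hw0 := (Finset.sum_eq_zero_iff_of_nonneg fun j _ => hw j).mp h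
    rw [h, zero_mul, Finset.sum_eq_zero fun j hj => by rw [hw0 j hj, zero_mul]]
  · rw [wavg, if_neg h, mul_div_cancel₀ _ h]

theorem wavg_of_sum_ne_zero (h : ∑ j ∈ s, w j ≠ 0) (f : J → ℝ) (d : ℝ) :
    wavg s w f d = ∑ j ∈ s, w j / (∑ j ∈ s, w j) * f j := by
  rw [wavg, if_neg h, Finset.sum_div]
  exact Finset.sum_congr rfl fun j _ => by ring

theorem sum_div_sum_self (h : ∑ j ∈ s, w j ≠ 0) : ∑ j ∈ s, w j / (∑ j ∈ s, w j) = 1 := by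
  rw [← Finset.sum_div, div_self h]

theorem sum_mul_mul_eq_wavg (hw : ∀ j, 0 ≤ w j) {f : J → ℝ} (hf : ∀ j, 0 ≤ f j)
    (r : J → ℝ) (d d' : ℝ) :
    ∑ j ∈ s, w j * f j * r j =
      (∑ j ∈ s, w j) * wavg s w f d * wavg s (fun j => w j * f j) r d' := by
  rw [sum_mul_wavg hw, sum_mul_wavg fun j => mul_nonneg (hw j) (hf j)]

theorem isProbDist_sum {α : Type} [Fintype α] (hw : ∀ j, 0 ≤ w j) (hw1 : ∑ j ∈ s, w j = 1)
    {p : J → α → ℝ} (hp : ∀ j, IsProbDist (p j)) :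
    IsProbDist fun a => ∑ j ∈ s, w j * p j a := by
  refine ⟨fun a => Finset.sum_nonneg fun j _ => mul_nonneg (hw j) ((hp j).1 a), ?_⟩
  rw [Finset.sum_comm]
  simp_rw [← Finset.mul_sum, (hp _).2, mul_one]
  exact hw1

theorem isProbDist_wavg {α : Type} [Fintype α] (hw : ∀ j, 0 ≤ w j) {p : J → α → ℝ}
    (hp : ∀ j, IsProbDist (p j)) {d : α → ℝ} (hd : IsProbDist d) :
    IsProbDist fun a => wavg s w (fun j => p j a) (d a) := by
  by_cases h : ∑ j ∈ s, w j = 0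
  · simpa [wavg, h] using hd
  · simp_rw [wavg_of_sum_ne_zero h]
    exact isProbDist_sum (fun j => div_nonneg (hw j) (Finset.sum_nonneg fun j _ => hw j))
      (sum_div_sum_self h) hp

end WeightedAverage

section Correlations

variable {ι : Type} [DecidableEq ι] {X A : ι → Type}

/-- The term `P_k(a_k|x_k) P_{k,x_k,a_k}(a_{∖k}|x_{∖k})` of a causal decomposition. -/
def firstThen {S : Finset ι} {k : ι} (hk : k ∈ S) (F : X k → A k → ℝ)
    (R : X k → A k → Corr X A (S.erase k)) : Corr X A S :=
  fun x a => F (x ⟨k, hk⟩) (a ⟨k, hk⟩) *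
    R (x ⟨k, hk⟩) (a ⟨k, hk⟩) (restr (erase_sub S k) x) (restr (erase_sub S k) a)

variable [∀ i, Fintype (A i)]

def marginal {S K : Finset ι} (h : K ⊆ S) (P : Corr X A S)
    (xout : (i : {j // j ∈ S \ K}) → X i.1) : Corr X A K :=
  fun u b => ∑ v : (i : {j // j ∈ S \ K}) → A i.1, P (glue h u xout) (glue h b v)

theorem isProbDist_firstThen {S : Finset ι} {k : ι} (hk : k ∈ S) {F : X k → A k → ℝ}
    {R : X k → A k → Corr X A (S.erase k)} (hF : ∀ xk, IsProbDist (F xk))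
    (hR : ∀ xk ak y, IsProbDist (R xk ak y)) (x : (i : {j // j ∈ S}) → X i.1) :
    IsProbDist (firstThen hk F R x) := by
  refine ⟨fun a => mul_nonneg ((hF _).1 _) ((hR _ _ _).1 _), ?_⟩
  rw [sum_ins hk]
  simp only [firstThen, ins_self,
    restr_ins_of_notMem hk (erase_sub S k) (Finset.notMem_erase k S), restr_self]
  simp_rw [← Finset.mul_sum, (hR _ _ _).2, mul_one]
  exact (hF _).2

theorem isProbDist_marginal {S K : Finset ι} (h : K ⊆ S) {P : Corr X A S}
    (hP : ∀ x, IsProbDist (P x)) (xout : (i : {j // j ∈ S \ K}) → X i.1)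
    (u : (i : {j // j ∈ K}) → X i.1) : IsProbDist (marginal h P xout u) :=
  ⟨fun _ => Finset.sum_nonneg fun _ _ => (hP _).1 _, (sum_glue h _).symm.trans (hP _).2⟩

end Correlations

namespace IsCausal

variable {ι : Type} [DecidableEq ι] {X A : ι → Type} [∀ i, Fintype (A i)]

theorem nonempty {S : Finset ι} {P : Corr X A S} (hP : IsCausal X A S P) : S.Nonempty := by
  cases hP with
  | base k => exact Finset.singleton_nonempty k
  | step S hS => exact Finset.card_pos.mp (by omega)

theorem isProbDist {S : Finset ι} {P : Corr X A S} (hP : IsCausal X A S P)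
    (x : (i : {j // j ∈ S}) → X i.1) : IsProbDist (P x) := by
  induction hP with
  | base k P hP => exact hP x
  | step S hS P q F R hq hq1 hF hR hP ih =>
    have hsum := isProbDist_sum hq hq1 fun k => isProbDist_firstThen k.2 (hF k) (ih k) x
    simp only [firstThen, ← mul_assoc] at hsum
    exact (funext (hP x)).symm ▸ hsum

theorem of_card_eq_one {K : Finset ι} {P : Corr X A K} (hK : K.card = 1)
    (hP : ∀ x, IsProbDist (P x)) : IsCausal X A K P := by
  obtain ⟨m, rfl⟩ := Finset.card_eq_one.mp hK
  exact base m P hP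

theorem exists_decomp {S : Finset ι} {P : Corr X A S} (hP : IsCausal X A S P)
    (hS : 2 ≤ S.card) :
    ∃ (q : {j // j ∈ S} → ℝ) (F : (k : {j // j ∈ S}) → X k.1 → A k.1 → ℝ)
      (R : (k : {j // j ∈ S}) → X k.1 → A k.1 → Corr X A (S.erase k.1)),
      (∀ k, 0 ≤ q k) ∧ ∑ k ∈ S.attach, q k = 1 ∧ (∀ k xk, IsProbDist (F k xk)) ∧
      (∀ k xk ak, IsCausal X A (S.erase k.1) (R k xk ak)) ∧
      ∀ x a, P x a = ∑ k ∈ S.attach, q k * firstThen k.2 (F k) (R k) x a := by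
  cases hP with
  | base k => simp at hS
  | step S _ P q F R hq hq1 hF hR hP =>
    exact ⟨q, F, R, hq, hq1, hF, hR, fun x a => (hP x a).trans
      (Finset.sum_congr rfl fun k _ => mul_assoc _ _ _)⟩

end IsCausal

section Mixtures

variable {ι : Type} [DecidableEq ι] {X A : ι → Type} [∀ i, Fintype (A i)]

/-- A decomposition with all the weight on party `k`. -/
theorem isCausal_firstThen {S : Finset ι} (hS : 2 ≤ S.card)
    {F : (k : {j // j ∈ S}) → X k.1 → A k.1 → ℝ}
    {R : (k : {j // j ∈ S}) → X k.1 → A k.1 → Corr X A (S.erase k.1)}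
    (hF : ∀ k xk, IsProbDist (F k xk)) (hR : ∀ k xk ak, IsCausal X A (S.erase k.1) (R k xk ak))
    (k : {j // j ∈ S}) : IsCausal X A S (firstThen k.2 (F k) (R k)) := by
  refine .step S hS _ (fun k' => if k' = k then 1 else 0) F R
    (fun k' => by split_ifs <;> norm_num) (by simp) hF hR fun x a => ?_
  simp [ite_mul, firstThen]

/-- The weights and distributions of each party acting first are mixed, and the correlations of
the remaining parties are mixed in proportion to the weight of that party's output. -/
theorem isCausal_sum_mul {K : Finset ι} {J : Type*} (s : Finset J) {w : J → ℝ}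
    {Q : J → Corr X A K} (hw : ∀ j, 0 ≤ w j) (hw1 : ∑ j ∈ s, w j = 1)
    (hQ : ∀ j, IsCausal X A K (Q j)) : IsCausal X A K fun x a => ∑ j ∈ s, w j * Q j x a := by
  induction K using Finset.strongInduction generalizing w with
  | H K ih =>
  obtain ⟨j₀, -⟩ := Finset.nonempty_of_sum_ne_zero (hw1 ▸ one_ne_zero : ∑ j ∈ s, w j ≠ 0)
  obtain hK1 | hK2 : K.card = 1 ∨ 2 ≤ K.card := by have := (hQ j₀).nonempty.card_pos; omega
  · exact .of_card_eq_one hK1 fun x => isProbDist_sum hw hw1 fun j => (hQ j).isProbDist x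
  choose q F R hq hq1 hF hR hQ_eq using fun j => (hQ j).exists_decomp hK2
  have hwq : ∀ k j, 0 ≤ w j * q j k := fun k j => mul_nonneg (hw j) (hq j k)
  refine .step K hK2 _ (fun k => ∑ j ∈ s, w j * q j k)
    (fun k xk ak => wavg s (fun j => w j * q j k) (fun j => F j k xk ak) (F j₀ k xk ak))
    (fun k xk ak y c => wavg s (fun j => w j * q j k * F j k xk ak)
      (fun j => R j k xk ak y c) (R j₀ k xk ak y c))
    (fun k => Finset.sum_nonneg fun j _ => hwq k j) ?_
    (fun k xk => isProbDist_wavg (hwq k) (fun j => hF j k xk) (hF j₀ k xk)) (fun k xk ak => ?_)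
    (fun x a => ?_)
  · rw [Finset.sum_comm]
    simp_rw [← Finset.mul_sum, hq1, mul_one]
    exact hw1
  · by_cases h : ∑ j ∈ s, w j * q j k * F j k xk ak = 0
    · simpa [wavg, h] using hR j₀ k xk ak
    · simp_rw [wavg_of_sum_ne_zero h]
      exact ih _ (Finset.erase_ssubset k.2)
        (fun j => div_nonneg (mul_nonneg (hwq k j) ((hF j k xk).1 ak))
          (Finset.sum_nonneg fun j _ => mul_nonneg (hwq k j) ((hF j k xk).1 ak)))
        (sum_div_sum_self h) (fun j => hR j k xk ak)
  · calc ∑ j ∈ s, w j * Q j x a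
        = ∑ k ∈ K.attach, ∑ j ∈ s, w j * q j k * F j k (x k) (a k) *
            R j k (x k) (a k) (restr (erase_sub K k.1) x) (restr (erase_sub K k.1) a) := by
          simp_rw [hQ_eq, Finset.mul_sum]
          rw [Finset.sum_comm]
          simp only [firstThen, mul_assoc]
      _ = _ := Finset.sum_congr rfl fun k _ =>
          sum_mul_mul_eq_wavg (hwq k) (fun j => (hF j k (x k)).1 (a k)) _ _ _

end Mixtures

section Marginals

variable {ι : Type} [DecidableEq ι] {X A : ι → Type} [∀ i, Fintype (A i)]

theorem marginal_sum_mul {S K : Finset ι} (h : K ⊆ S) {J : Type*} (s : Finset J) (w : J → ℝ)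
    (Q : J → Corr X A S) (xout : (i : {j // j ∈ S \ K}) → X i.1) :
    marginal h (fun x a => ∑ j ∈ s, w j * Q j x a) xout =
      fun u b => ∑ j ∈ s, w j * marginal h (Q j) xout u b := by
  funext u b
  simp only [marginal, Finset.mul_sum]
  exact Finset.sum_comm

theorem marginal_firstThen_of_mem {S K : Finset ι} (hKS : K ⊆ S) {k : ι} (hk : k ∈ K)
    (F : X k → A k → ℝ) (R : X k → A k → Corr X A (S.erase k))
    (xout : (i : {j // j ∈ S \ K}) → X i.1) :
    marginal hKS (firstThen (hKS hk) F R) xout =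
      firstThen hk F fun xk ak => marginal (Finset.erase_subset_erase k hKS) (R xk ak)
        (restr (erase_sdiff_erase_subset S K k) xout) := by
  funext u b
  have hD := erase_sdiff_erase_subset S K k
  simp only [marginal, firstThen, glue_of_mem hKS _ _ ⟨k, hKS hk⟩ hk,
    restr_glue hKS (erase_sub S k) (Finset.erase_subset_erase k hKS) (erase_sub K k) hD]
  rw [← Finset.mul_sum]
  congr 1
  refine sum_restr_of_eq ?_ (fun v => R (u ⟨k, hk⟩) (b ⟨k, hk⟩) _ (glue _ _ v))
  rw [← Finset.erase_sdiff_distrib, Finset.erase_eq_of_notMem]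
  simp [hk]

theorem marginal_firstThen_of_notMem {S K : Finset ι} (hKS : K ⊆ S) {k : ι} (hkS : k ∈ S)
    (hk : k ∉ K) (F : X k → A k → ℝ) (R : X k → A k → Corr X A (S.erase k))
    (xout : (i : {j // j ∈ S \ K}) → X i.1) :
    marginal hKS (firstThen hkS F R) xout =
      fun u b => ∑ ak, F (xout ⟨k, Finset.mem_sdiff.mpr ⟨hkS, hk⟩⟩) ak *
        marginal (Finset.subset_erase.mpr ⟨hKS, hk⟩)
          (R (xout ⟨k, Finset.mem_sdiff.mpr ⟨hkS, hk⟩⟩) ak)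
          (restr (Finset.sdiff_subset_sdiff (erase_sub S k) subset_rfl) xout) u b := by
  funext u b
  have hkD : k ∈ S \ K := Finset.mem_sdiff.mpr ⟨hkS, hk⟩
  have hD := Finset.sdiff_subset_sdiff (erase_sub S k) (subset_refl K)
  simp only [marginal, firstThen, Finset.mul_sum]
  rw [sum_ins hkD]
  simp only [glue_of_notMem hKS _ _ ⟨k, hkS⟩ hk, ins_self,
    restr_glue hKS (erase_sub S k) (Finset.subset_erase.mpr ⟨hKS, hk⟩) subset_rfl hD,
    restr_self, restr_ins_of_notMem hkD hD (by simp)]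
  refine Finset.sum_congr rfl fun ak _ => sum_restr_of_eq (Finset.erase_sdiff_comm S K k)
    (fun v => F _ ak * R _ ak _ (glue _ b v))

theorem IsCausal.marginal {S : Finset ι} {P : Corr X A S} (hP : IsCausal X A S P)
    {K : Finset ι} (hK : K.Nonempty) (hKS : K ⊆ S) (xout : (i : {j // j ∈ S \ K}) → X i.1) :
    IsCausal X A K (marginal hKS P xout) := by
  induction hP generalizing K with
  | base k P hP =>
    have hK1 : K.card = 1 := le_antisymm (Finset.card_le_card hKS) hK.card_pos
    exact .of_card_eq_one hK1 (isProbDist_marginal hKS hP xout)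
  | step S hS P q F R hq hq1 hF hR hP ih =>
    obtain hK1 | hK2 : K.card = 1 ∨ 2 ≤ K.card := by have := hK.card_pos; omega
    · exact .of_card_eq_one hK1
        (isProbDist_marginal hKS (IsCausal.step S hS P q F R hq hq1 hF hR hP).isProbDist xout)
    have hP' : P = fun x a => ∑ k ∈ S.attach, q k * firstThen k.2 (F k) (R k) x a :=
      funext fun x => funext fun a => (hP x a).trans
        (Finset.sum_congr rfl fun k _ => mul_assoc _ _ _)
    rw [hP', marginal_sum_mul]
    refine isCausal_sum_mul _ hq hq1 fun k => ?_
    by_cases hk : k.1 ∈ K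
    · rw [marginal_firstThen_of_mem hKS hk]
      have hKk : ∀ k' ∈ K, (K.erase k').Nonempty := fun k' hk' =>
        (Finset.erase_nonempty hk').mpr (Finset.one_lt_card_iff_nontrivial.mp hK2)
      exact isCausal_firstThen hK2 (fun k' => hF ⟨k'.1, hKS k'.2⟩)
        (fun k' xk ak => ih ⟨k'.1, hKS k'.2⟩ xk ak (hKk k'.1 k'.2)
          (Finset.erase_subset_erase k'.1 hKS)
          (restr (erase_sdiff_erase_subset S K k'.1) xout)) ⟨k.1, hk⟩
    · rw [marginal_firstThen_of_notMem hKS k.2 hk]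
      exact isCausal_sum_mul _ (hF k _).1 (hF k _).2 fun ak => ih k _ ak hK _ _

end Marginals

/-- the marginal of a causal correlation over the outputs of the parties outside
a nonempty strict subset `K`, with the inputs of those outside parties fixed, is causal. -/
theorem marginal_of_causal_isCausal {ι : Type} [DecidableEq ι]
    (X A : ι → Type) [∀ i, Fintype (A i)] (S : Finset ι)
    (P : Corr X A S) (hP : IsCausal X A S P)
    (K : Finset ι) (hK : K.Nonempty) (hKS : K ⊂ S)
    (xout : (i : {j // j ∈ S \ K}) → X i.1) :
    IsCausal X A K (fun (u : (i : {j // j ∈ K}) → X i.1) (b : (i : {j // j ∈ K}) → A i.1) =>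
      ∑ v : (i : {j // j ∈ S \ K}) → A i.1,
        P (glue hKS.subset u xout) (glue hKS.subset b v)) :=
  hP.marginal hK hKS.subset xout
end

section
/- For N ≥ 2, any N-partite correlation of the form P(a|x) = Σ_{k=1}^N q_k · P_k(a_{∖k}|x_{∖k}) · P_{k,x_{∖k},a_{∖k}}(a_k|x_k), with q_k ≥ 0, Σ_k q_k = 1, where each P_k(a_{∖k}|x_{∖k}) is a causal (N−1)-partite correlation and where, for each (k, x_{∖k}, a_{∖k}), P_{k,x_{∖k},a_{∖k}}(a_k|x_k) is a single-party probability distribution, is causal. (In each term of the sum, party k acts 'last'.) -/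
/-!
Causal correlations on a fixed set of parties form a convex set. To mix two of them, mix their
decompositions party by party: the first-party weight of `k` is the mixed weight, its
first-party distribution the normalised mixture of the two, and the two remainders are mixed
with weights proportional to the probability of `k`'s input-output pair under each, which is
causal again by induction.

So it suffices that each term "causal `Q` on the other parties, then `k`" is causal. This goes by
induction on the causal structure of `Q`: if `Q` is a single-party distribution of `j`, then `j`
acts first and `k` second; otherwise the party `l` acting first in `Q` also acts first in the
product, and the remainder is again of the "`k` acts last" form, on one party fewer. The party
`k` itself never acts first.
-/

theorem Finset.sum_attach_of_subset {α M : Type*} [AddCommMonoid M] {S T : Finset α}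
    (hTS : T ⊆ S) (g : {j // j ∈ S} → M) (hg : ∀ m, m.1 ∉ T → g m = 0) :
    ∑ m ∈ S.attach, g m = ∑ l ∈ T.attach, g ⟨l.1, hTS l.2⟩ := by
  rw [← Finset.univ_eq_attach, ← Finset.univ_eq_attach]
  exact (Fintype.sum_of_injective (fun l : {j // j ∈ T} => (⟨l.1, hTS l.2⟩ : {j // j ∈ S}))
    (fun _ _ h => Subtype.ext (Subtype.mk.inj h)) _ g
    (fun m hm => hg m fun h => hm ⟨⟨m.1, h⟩, rfl⟩) fun _ => rfl).symm

theorem StarConvex.exists_smul_add_smul_eq {𝕜 E : Type*} [Field 𝕜] [LinearOrder 𝕜]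
    [IsStrictOrderedRing 𝕜] [AddCommGroup E] [Module 𝕜 E] {x y : E} {K : Set E}
    (hK : StarConvex 𝕜 x K) (hy : y ∈ K) {a b : 𝕜} (ha : 0 ≤ a) (hb : 0 ≤ b) :
    ∃ z ∈ K, a • x + b • y = (a + b) • z := by
  rcases (add_nonneg ha hb).eq_or_lt with hab | hab
  · obtain ⟨rfl, rfl⟩ : a = 0 ∧ b = 0 := ⟨by linarith, by linarith⟩
    exact ⟨y, hy, by simp⟩
  · refine ⟨(a / (a + b)) • x + (b / (a + b)) • y,
      hK hy (div_nonneg ha hab.le) (div_nonneg hb hab.le) (by field_simp), ?_⟩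
    rw [smul_add, smul_smul, smul_smul, mul_div_cancel₀ _ hab.ne', mul_div_cancel₀ _ hab.ne']

section ProbDist

variable {α β : Type} [Fintype α] [Fintype β]

theorem IsProbDist.nonempty {p : α → ℝ} (hp : IsProbDist p) : Nonempty α := by
  by_contra h
  have := hp.2
  simp [not_nonempty_iff.mp h] at this

theorem isProbDist_uniform [Nonempty α] : IsProbDist (fun _ : α => (Fintype.card α : ℝ)⁻¹) :=
  ⟨fun _ => by positivity, by simp⟩

theorem IsProbDist.comp_equiv {p : α → ℝ} (hp : IsProbDist p) (e : β ≃ α) :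
    IsProbDist (p ∘ e) :=
  ⟨fun b => hp.1 (e b), (e.sum_comp p).trans hp.2⟩

end ProbDist

namespace Corr

variable {ι : Type} {X A : ι → Type} {S : Finset ι}

instance : AddCommGroup (Corr X A S) :=
  inferInstanceAs (AddCommGroup (_ → _ → ℝ))

instance : Module ℝ (Corr X A S) :=
  inferInstanceAs (Module ℝ (_ → _ → ℝ))

variable (x : (i : {j // j ∈ S}) → X i.1) (a : (i : {j // j ∈ S}) → A i.1)

@[simp] theorem add_apply (P Q : Corr X A S) : (P + Q) x a = P x a + Q x a := rfl

@[simp] theorem smul_apply (c : ℝ) (P : Corr X A S) : (c • P) x a = c * P x a := rfl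

@[simp] theorem sum_apply {κ : Type} (s : Finset κ) (P : κ → Corr X A S) :
    (∑ k ∈ s, P k) x a = ∑ k ∈ s, P k x a := by
  induction s using Finset.cons_induction with
  | empty => rfl
  | cons k s hk ih => rw [Finset.sum_cons, Finset.sum_cons, add_apply, ih]

end Corr

section Causal

variable {ι : Type} [DecidableEq ι] {X A : ι → Type} [∀ i, Fintype (A i)]

theorem ins_restr {Y : ι → Type} {T : Finset ι} {j : ι} (hj : j ∈ T)
    (x : (i : {l // l ∈ T}) → Y i.1) : ins hj (x ⟨j, hj⟩) (restr (erase_sub T j) x) = x := by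
  funext ⟨i, hi⟩
  unfold ins
  split_ifs with h
  · subst h
    rfl
  · rfl

theorem IsCausal.isProbDist_of_card_le_one_s6 {S : Finset ι} {P : Corr X A S}
    (h : IsCausal X A S P) (hS : S.card ≤ 1) (x : (i : {j // j ∈ S}) → X i.1) :
    IsProbDist (P x) := by
  cases h with
  | base _ _ hP => exact hP x
  | step _ hS' => omega

theorem IsProbDist.comp_eval_of_eq_singleton {T : Finset ι} {k : ι} (hT : T = {k}) (hk : k ∈ T)
    {p : A k → ℝ} (hp : IsProbDist p) :
    IsProbDist (fun b : (i : {j // j ∈ T}) → A i.1 => p (b ⟨k, hk⟩)) := by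
  subst hT
  exact hp.comp_equiv (Equiv.piUnique fun i : ({k} : Finset ι) => A i.1)

theorem isCausal_of_eq_singleton {T : Finset ι} {k : ι} (hT : T = {k}) {P : Corr X A T}
    (hP : ∀ x, IsProbDist (P x)) : IsCausal X A T P := by
  subst hT
  exact .base k P hP

theorem IsCausal.comp_restr_of_eq {T T' : Finset ι} (hT : T' = T) {Q : Corr X A T}
    (hQ : IsCausal X A T Q) : IsCausal X A T' (fun u b => Q (restr hT.ge u) (restr hT.ge b)) := by
  subst hT
  exact hQ

theorem IsCausal.exists_decomposition {S : Finset ι} {P : Corr X A S} (h : IsCausal X A S P)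
    (hS : 2 ≤ S.card) :
    ∃ (q : {j // j ∈ S} → ℝ) (Pfirst : (k : {j // j ∈ S}) → X k.1 → A k.1 → ℝ)
      (Prest : (k : {j // j ∈ S}) → X k.1 → A k.1 → Corr X A (S.erase k.1)),
      (∀ k, 0 ≤ q k) ∧ ∑ k ∈ S.attach, q k = 1 ∧ (∀ k xk, IsProbDist (Pfirst k xk)) ∧
      (∀ k xk ak, IsCausal X A (S.erase k.1) (Prest k xk ak)) ∧
      ∀ x a, P x a = ∑ k ∈ S.attach, q k * Pfirst k (x k) (a k) *
        Prest k (x k) (a k) (restr (erase_sub S k.1) x) (restr (erase_sub S k.1) a) := by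
  cases h with
  | base => simp at hS
  | step _ _ _ q Pfirst Prest hq hq1 hPfirst hPrest hP =>
    exact ⟨q, Pfirst, Prest, hq, hq1, hPfirst, hPrest, hP⟩

theorem IsCausal.nonempty_output {T : Finset ι} {Q : Corr X A T} (hQ : IsCausal X A T Q)
    {m : ι} (hm : m ∈ T) (xm : X m) : Nonempty (A m) := by
  cases hQ with
  | base k P hP =>
    obtain rfl := Finset.mem_singleton.mp hm
    obtain ⟨a⟩ := (hP ((Equiv.piUnique _).symm xm)).nonempty
    exact ⟨a default⟩
  | step _ _ _ _ Pfirst _ _ _ hPfirst => exact (hPfirst ⟨m, hm⟩ xm).nonempty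

theorem starConvex_isCausal {S : Finset ι} {P : Corr X A S} (hP : IsCausal X A S P) :
    StarConvex ℝ P {Q | IsCausal X A S Q} := by
  induction hP with
  | base k P hP =>
    intro P' hP' a b ha hb hab
    have hP'dist := IsCausal.isProbDist_of_card_le_one_s6 hP' (by simp)
    exact IsCausal.base k _ fun x => convex_stdSimplex ℝ _ (hP x) (hP'dist x) ha hb hab
  | step S hS P q Pfirst Prest hq hq1 hPfirst hPrest hP ih =>
    intro P' hP' a b ha hb hab
    obtain ⟨q', Pfirst', Prest', hq', hq1', hPfirst', hPrest', hP'eq⟩ :=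
      IsCausal.exists_decomposition hP' hS
    have hmixFirst (k : {j // j ∈ S}) (xk : X k.1) : ∃ F : A k.1 → ℝ, IsProbDist F ∧
        (a * q k) • Pfirst k xk + (b * q' k) • Pfirst' k xk = (a * q k + b * q' k) • F :=
      (convex_stdSimplex ℝ _ (hPfirst k xk)).exists_smul_add_smul_eq
        (hPfirst' k xk) (mul_nonneg ha (hq k)) (mul_nonneg hb (hq' k))
    have hmixRest (k : {j // j ∈ S}) (xk : X k.1) (ak : A k.1) :
        ∃ R : Corr X A (S.erase k.1), IsCausal X A (S.erase k.1) R ∧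
          (a * q k * Pfirst k xk ak) • Prest k xk ak + (b * q' k * Pfirst' k xk ak) • Prest' k xk ak
            = (a * q k * Pfirst k xk ak + b * q' k * Pfirst' k xk ak) • R :=
      (ih k xk ak).exists_smul_add_smul_eq (hPrest' k xk ak)
        (mul_nonneg (mul_nonneg ha (hq k)) ((hPfirst k xk).1 ak))
        (mul_nonneg (mul_nonneg hb (hq' k)) ((hPfirst' k xk).1 ak))
    choose F hF hFeq using hmixFirst
    choose R hR hReq using hmixRest
    refine IsCausal.step S hS _ (fun k => a * q k + b * q' k) F R
      (fun k => add_nonneg (mul_nonneg ha (hq k)) (mul_nonneg hb (hq' k)))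
      (by rw [Finset.sum_add_distrib, ← Finset.mul_sum, ← Finset.mul_sum, hq1, hq1', mul_one,
        mul_one, hab])
      hF hR fun x o => ?_
    have hfirst k := congrFun (hFeq k (x k)) (o k)
    have hrest k := congrFun (congrFun (hReq k (x k) (o k)) (restr (erase_sub S k.1) x))
      (restr (erase_sub S k.1) o)
    simp only [Pi.add_apply, Pi.smul_apply, smul_eq_mul, Corr.add_apply, Corr.smul_apply]
      at hfirst hrest
    rw [Corr.add_apply, Corr.smul_apply, Corr.smul_apply, hP, hP'eq, Finset.mul_sum,
      Finset.mul_sum, ← Finset.sum_add_distrib]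
    refine Finset.sum_congr rfl fun k _ => ?_
    linear_combination hrest k + (R k (x k) (o k) (restr (erase_sub S k.1) x)
      (restr (erase_sub S k.1) o)) * hfirst k

theorem convex_isCausal (S : Finset ι) : Convex ℝ {P : Corr X A S | IsCausal X A S P} :=
  fun _ hP => starConvex_isCausal hP

theorem isCausal_of_decomposition_over_erase {S T : Finset ι} {k : ι} (hk : k ∈ S)
    (hT : S.erase k = T) (hTS : T ⊆ S) (hA : X k → Nonempty (A k)) {Q : Corr X A T}
    (hQ : IsCausal X A T Q) {P : Corr X A S} (q : {j // j ∈ T} → ℝ)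
    (Pfirst : (l : {j // j ∈ T}) → X l.1 → A l.1 → ℝ)
    (Prest : (l : {j // j ∈ T}) → X l.1 → A l.1 → Corr X A (S.erase l.1))
    (hq : ∀ l, 0 ≤ q l) (hq1 : ∑ l ∈ T.attach, q l = 1)
    (hPfirst : ∀ l xl, IsProbDist (Pfirst l xl))
    (hPrest : ∀ l xl al, IsCausal X A (S.erase l.1) (Prest l xl al))
    (hP : ∀ x a, P x a = ∑ l ∈ T.attach, q l * Pfirst l (x ⟨l, hTS l.2⟩) (a ⟨l, hTS l.2⟩) *
      Prest l (x ⟨l, hTS l.2⟩) (a ⟨l, hTS l.2⟩) (restr (erase_sub S l.1) x)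
        (restr (erase_sub S l.1) a)) :
    IsCausal X A S P := by
  have hcard : 2 ≤ S.card := by
    have hT1 : 0 < T.card :=
      Finset.card_pos.mpr (Finset.attach_nonempty_iff.mp
        (Finset.nonempty_of_sum_ne_zero (f := q) (by rw [hq1]; exact one_ne_zero)))
    have := Finset.card_erase_of_mem hk
    rw [hT] at this
    omega
  have herase : ∀ m ∈ S, m ∉ T → S.erase m = T := by
    intro m hm hmT
    by_cases hmk : m = k
    · rw [hmk, hT]
    · exact absurd (hT ▸ Finset.mem_erase.mpr ⟨hmk, hm⟩) hmT
  -- party `k` gets weight `0`; its first-party distribution and remainder are placeholders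
  refine IsCausal.step S hcard P
    (fun m => if h : m.1 ∈ T then q ⟨m.1, h⟩ else 0)
    (fun m xm am => if h : m.1 ∈ T then Pfirst ⟨m.1, h⟩ xm am else (Fintype.card (A m.1) : ℝ)⁻¹)
    (fun m xm am u b => if h : m.1 ∈ T then Prest ⟨m.1, h⟩ xm am u b
      else Q (restr (herase m.1 m.2 h).ge u) (restr (herase m.1 m.2 h).ge b))
    (fun m => by split_ifs <;> simp [hq]) ?_ ?_ ?_ ?_
  · rw [Finset.sum_attach_of_subset hTS _ fun m hm => dif_neg hm]
    simpa only [dif_pos (Subtype.property _)] using hq1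
  · intro m xm
    by_cases hm : m.1 ∈ T
    · simpa only [dif_pos hm] using hPfirst ⟨m.1, hm⟩ xm
    · obtain rfl : m.1 = k := by_contra fun hmk => hm (hT ▸ Finset.mem_erase.mpr ⟨hmk, m.2⟩)
      have := hA xm
      simpa only [dif_neg hm] using isProbDist_uniform
  · intro m xm am
    by_cases hm : m.1 ∈ T
    · simpa only [dif_pos hm] using hPrest ⟨m.1, hm⟩ xm am
    · simpa only [dif_neg hm] using hQ.comp_restr_of_eq (herase m.1 m.2 hm)
  · intro x a
    rw [hP, Finset.sum_attach_of_subset hTS _ fun m hm => by simp only [dif_neg hm, zero_mul]]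
    simp only [dif_pos (Subtype.property _)]

theorem IsCausal.mul_last {T : Finset ι} {Q : Corr X A T} (hQ : IsCausal X A T Q) {S : Finset ι}
    {k : ι} (hk : k ∈ S) (hT : S.erase k = T) (hTS : T ⊆ S) (hA : X k → Nonempty (A k))
    {L : ((i : {j // j ∈ T}) → X i.1) → ((i : {j // j ∈ T}) → A i.1) → X k → A k → ℝ}
    (hL : ∀ u b xk, IsProbDist (L u b xk)) :
    IsCausal X A S (fun x a => Q (restr hTS x) (restr hTS a) *
      L (restr hTS x) (restr hTS a) (x ⟨k, hk⟩) (a ⟨k, hk⟩)) := by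
  induction hQ generalizing S with
  | base j Q hQ =>
    have hjk : j ≠ k := (Finset.mem_erase.mp (hT.symm ▸ Finset.mem_singleton_self j)).1
    have hkj : k ∈ S.erase j := Finset.mem_erase.mpr ⟨hjk.symm, hk⟩
    have hSj : S.erase j = {k} := by
      rw [← Finset.insert_erase hk, hT, Finset.erase_insert_of_ne hjk.symm,
        Finset.erase_singleton, insert_empty_eq]
    have hrestr {Y : ι → Type} (y : (i : {l // l ∈ S}) → Y i.1) :
        restr hTS y = (Equiv.piUnique fun i : ({j} : Finset ι) => Y i.1).symm
          (y ⟨j, hTS (Finset.mem_singleton_self j)⟩) :=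
      (Equiv.piUnique _).eq_symm_apply.mpr rfl
    refine isCausal_of_decomposition_over_erase hk hT hTS hA (.base j Q hQ) (fun _ => 1)
      (uniqueElim fun xj aj => Q ((Equiv.piUnique _).symm xj) ((Equiv.piUnique _).symm aj))
      (uniqueElim fun xj aj => (fun u b => L ((Equiv.piUnique _).symm xj)
        ((Equiv.piUnique _).symm aj) (u ⟨k, hkj⟩) (b ⟨k, hkj⟩) : Corr X A (S.erase j)))
      (fun _ => zero_le_one) (by simp) ?_ ?_ ?_
    · intro l xl
      obtain rfl := Subsingleton.elim l default
      exact (hQ _).comp_equiv (Equiv.piUnique _).symm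
    · intro l xl al
      obtain rfl := Subsingleton.elim l default
      exact isCausal_of_eq_singleton hSj fun u => (hL _ _ _).comp_eval_of_eq_singleton hSj hkj
    · intro x a
      rw [← Finset.univ_eq_attach, Fintype.sum_unique, one_mul]
      simp only [hrestr]
      rfl
  | step _ hT2 Q r F R hr hr1 hF hR hQeq ih =>
    subst hT
    have hkl (l : {j // j ∈ S.erase k}) : k ∈ S.erase l.1 :=
      Finset.mem_erase.mpr ⟨fun h => (Finset.mem_erase.mp l.2).1 h.symm, hk⟩
    have hsub (l : {j // j ∈ S.erase k}) : (S.erase k).erase l.1 ⊆ S.erase l.1 :=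
      Finset.erase_subset_erase l.1 hTS
    refine isCausal_of_decomposition_over_erase hk rfl hTS hA
      (.step _ hT2 Q r F R hr hr1 hF hR hQeq) r F (fun l xl al u b => R l xl al (restr (hsub l) u) (restr (hsub l) b) *
        L (ins l.2 xl (restr (hsub l) u)) (ins l.2 al (restr (hsub l) b)) (u ⟨k, hkl l⟩)
          (b ⟨k, hkl l⟩))
      hr hr1 hF (fun l xl al => ih l xl al (hkl l) Finset.erase_right_comm (hsub l)
        (L := fun u b => L (ins l.2 xl u) (ins l.2 al b)) fun _ _ => hL _ _) fun x a => ?_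
    show Q (restr hTS x) (restr hTS a) * _ = _
    rw [hQeq, Finset.sum_mul]
    refine Finset.sum_congr rfl fun l _ => ?_
    have hins {Y : ι → Type} (y : (i : {j // j ∈ S}) → Y i.1) :
        ins l.2 (y ⟨l, hTS l.2⟩) (restr (hsub l) (restr (erase_sub S l.1) y)) = restr hTS y :=
      ins_restr l.2 (restr hTS y)
    rw [hins x, hins a]
    exact mul_assoc _ _ _

/-- any correlation of the 'some party acts last' form—a convex combination,
over parties `k`, of products of a causal correlation for the other parties with single-party
distributions for `k` that may depend on the other parties' inputs and outputs—is causal. -/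
theorem party_last_form_isCausal {ι : Type} [DecidableEq ι]
    (X A : ι → Type) [∀ i, Fintype (A i)] (S : Finset ι) (hS : 2 ≤ S.card)
    (P : Corr X A S)
    (q : {j // j ∈ S} → ℝ)
    (PNk : (k : {j // j ∈ S}) → Corr X A (S.erase k.1))
    (Plast : (k : {j // j ∈ S}) → ((i : {j // j ∈ S.erase k.1}) → X i.1) →
      ((i : {j // j ∈ S.erase k.1}) → A i.1) → X k.1 → A k.1 → ℝ)
    (hq : ∀ k, 0 ≤ q k) (hq1 : ∑ k ∈ S.attach, q k = 1)
    (hPNk : ∀ k, IsCausal X A (S.erase k.1) (PNk k))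
    (hPlast : ∀ k u b xk, IsProbDist (Plast k u b xk))
    (hP : ∀ x a, P x a = ∑ k ∈ S.attach, q k *
      PNk k (restr (erase_sub S k.1) x) (restr (erase_sub S k.1) a) *
      Plast k (restr (erase_sub S k.1) x) (restr (erase_sub S k.1) a) (x k) (a k)) :
    IsCausal X A S P := by
  have hA (k : {j // j ∈ S}) (xk : X k.1) : Nonempty (A k.1) := by
    obtain ⟨b, hbS, hbk⟩ := Finset.exists_mem_ne hS k.1
    exact (hPNk ⟨b, hbS⟩).nonempty_output (Finset.mem_erase.mpr ⟨fun h => hbk h.symm, k.2⟩) xk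
  let term (k : {j // j ∈ S}) : Corr X A S := fun x a =>
    PNk k (restr (erase_sub S k.1) x) (restr (erase_sub S k.1) a) *
      Plast k (restr (erase_sub S k.1) x) (restr (erase_sub S k.1) a) (x k) (a k)
  have hterm (k : {j // j ∈ S}) : IsCausal X A S (term k) :=
    (hPNk k).mul_last k.2 rfl (erase_sub S k.1) (hA k) (hPlast k)
  have hP' : P = ∑ k ∈ S.attach, q k • term k := by
    funext x a
    rw [hP, Corr.sum_apply]
    exact Finset.sum_congr rfl fun k _ => mul_assoc _ _ _
  rw [hP']
  exact (convex_isCausal S).sum_mem (fun k _ => hq k) hq1 fun k _ => hterm k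
end Causal
end
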